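/- If α > 0 and μ' ∈ C⁺(γ) has two rows k ≠ k' and two column indices j < j' with μ'_{kj} < μ'_{kj'} and μ'_{k'j} > μ'_{k'j'}, then μ' is not a maximum point of G on C(γ). Equivalently, at a maximum point of G all rows can be simultaneously ordered by a single permutation σ ∈ S_q with μ'_{kσ(1)} ≤ … ≤ μ'_{kσ(q)} for all k. -/

import Mathlib

def Cset (s q : ℕ) (γ : Fin s → ℝ) : Set (Fin s → Fin q → ℝ) :=
  {μ | (∀ k c, 0 ≤ μ k c) ∧ ∀ k, ∑ c, μ k c = γ k}

noncomputable def G (s q : ℕ) (α β : ℝ) (μ : Fin s → Fin q → ℝ) : ℝ :=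
  (∑ c, ∑ k, β / 2 * (μ k c) ^ 2)
    + (∑ c, ∑ k, ∑ k' ∈ Finset.univ.filter (fun k' => k' ≠ k), α / 2 * (μ k c * μ k' c))
    - ∑ k, ∑ c, μ k c * Real.log (μ k c)

/-!
Replacing row `t` of `μ` by its image under the transposition of columns `j, j'` keeps `μ` in
`C(γ)` and leaves every term of `G` unchanged except the column part `(α/2) ∑_c (∑_k μ_{kc})²`;
with `e = μ_{tj'} - μ_{tj}` and `D = ∑_k μ_{kj} - ∑_k μ_{kj'}` the gain is `α e (D + e)`.
At a maximum this gain is `≤ 0` for every row. For a row with `e > 0` this forces `D ≤ -e < 0`,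
for a row with `e < 0` it forces `D ≥ -e > 0`, so two discordant rows cannot coexist.
-/

open Finset

theorem sum_sum_filter_ne_mul {ι R : Type*} [Fintype ι] [DecidableEq ι] [CommRing R]
    (f : ι → R) :
    ∑ k, ∑ k' ∈ univ.filter (fun k' => k' ≠ k), f k * f k' = (∑ k, f k) ^ 2 - ∑ k, f k ^ 2 := by
  simp_rw [filter_ne', ← mul_sum, sum_erase_eq_sub (mem_univ _), mul_sub, sum_sub_distrib,
    ← sum_mul, sq]

theorem G_eq (s q : ℕ) (α β : ℝ) (μ : Fin s → Fin q → ℝ) :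
    G s q α β μ = (β - α) / 2 * ∑ k, ∑ c, μ k c ^ 2 + α / 2 * ∑ c, (∑ k, μ k c) ^ 2
      - ∑ k, ∑ c, μ k c * Real.log (μ k c) := by
  have hcross : ∀ c, ∑ k, ∑ k' ∈ univ.filter (fun k' => k' ≠ k), α / 2 * (μ k c * μ k' c)
      = α / 2 * ((∑ k, μ k c) ^ 2 - ∑ k, μ k c ^ 2) := fun c => by
    rw [← sum_sum_filter_ne_mul fun k => μ k c]
    simp only [mul_sum]
  rw [G, sum_congr rfl fun c _ => hcross c]
  simp only [← mul_sum, sum_sub_distrib]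
  rw [sum_comm (f := fun c k => μ k c ^ 2)]
  ring

def permRow {ι κ : Type*} [DecidableEq ι] (μ : ι → κ → ℝ) (t : ι) (σ : Equiv.Perm κ) :
    ι → κ → ℝ :=
  Function.update μ t (μ t ∘ σ)

section permRow

variable {ι κ : Type*} [DecidableEq ι] (μ : ι → κ → ℝ) (t : ι) (σ : Equiv.Perm κ)

theorem sum_comp_permRow [Fintype κ] (φ : ℝ → ℝ) (k : ι) :
    ∑ c, φ (permRow μ t σ k c) = ∑ c, φ (μ k c) := by
  by_cases hk : k = t
  · subst hk
    simpa [permRow] using Equiv.sum_comp σ (fun c => φ (μ k c))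
  · simp [permRow, Function.update_of_ne hk]

theorem sum_permRow_apply [Fintype ι] (c : κ) :
    ∑ k, permRow μ t σ k c = ∑ k, μ k c + (μ t (σ c) - μ t c) := by
  have hrow : ∀ k, permRow μ t σ k c = μ k c + if k = t then μ t (σ c) - μ t c else 0 := by
    intro k
    by_cases hk : k = t
    · subst hk; simp [permRow]
    · simp [permRow, hk]
  simp [hrow, sum_add_distrib]

end permRow

theorem permRow_mem_Cset {s q : ℕ} {γ : Fin s → ℝ} {μ : Fin s → Fin q → ℝ}
    (hμ : μ ∈ Cset s q γ) (t : Fin s) (σ : Equiv.Perm (Fin q)) :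
    permRow μ t σ ∈ Cset s q γ := by
  obtain ⟨hnonneg, hrow⟩ := hμ
  refine ⟨fun k c => ?_, fun k => ?_⟩
  · by_cases hk : k = t
    · subst hk; simpa [permRow] using hnonneg k (σ c)
    · simpa [permRow, Function.update_of_ne hk] using hnonneg k c
  · rw [← hrow k]
    exact sum_comp_permRow μ t σ id k

theorem G_permRow_swap (s q : ℕ) (α β : ℝ) (μ : Fin s → Fin q → ℝ) (t : Fin s) {j j' : Fin q}
    (hjj' : j ≠ j') :
    G s q α β (permRow μ t (Equiv.swap j j'))
      = G s q α β μ + α * (μ t j' - μ t j) * ((∑ k, μ k j - ∑ k, μ k j') + (μ t j' - μ t j)) := by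
  set ν := permRow μ t (Equiv.swap j j')
  have hrows (φ : ℝ → ℝ) : ∑ k, ∑ c, φ (ν k c) = ∑ k, ∑ c, φ (μ k c) :=
    sum_congr rfl fun k _ => sum_comp_permRow μ t _ φ k
  have hcols : ∑ c, (∑ k, ν k c) ^ 2 - ∑ c, (∑ k, μ k c) ^ 2
      = ((∑ k, ν k j) ^ 2 - (∑ k, μ k j) ^ 2) + ((∑ k, ν k j') ^ 2 - (∑ k, μ k j') ^ 2) := by
    rw [← sum_sub_distrib]
    refine Fintype.sum_eq_add j j' hjj' fun c ⟨hcj, hcj'⟩ => ?_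
    simp [ν, sum_permRow_apply, Equiv.swap_apply_of_ne_of_ne hcj hcj']
  have hcolj : ∑ k, ν k j = ∑ k, μ k j + (μ t j' - μ t j) := by
    rw [sum_permRow_apply, Equiv.swap_apply_left]
  have hcolj' : ∑ k, ν k j' = ∑ k, μ k j' - (μ t j' - μ t j) := by
    rw [sum_permRow_apply, Equiv.swap_apply_right]
    ring
  rw [hcolj, hcolj'] at hcols
  rw [G_eq, G_eq, hrows (· ^ 2), hrows fun x => x * Real.log x]
  linear_combination α / 2 * hcols

theorem swap_gain_nonpos_of_isMaxOn {s q : ℕ} {α β : ℝ} {γ : Fin s → ℝ}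
    {μ : Fin s → Fin q → ℝ} (hμ : μ ∈ Cset s q γ) (hmax : IsMaxOn (G s q α β) (Cset s q γ) μ)
    (t : Fin s) {j j' : Fin q} (hjj' : j ≠ j') :
    α * (μ t j' - μ t j) * ((∑ k, μ k j - ∑ k, μ k j') + (μ t j' - μ t j)) ≤ 0 := by
  have := hmax (permRow_mem_Cset hμ t (Equiv.swap j j'))
  rw [Set.mem_ofPred_eq, G_permRow_swap s q α β μ t hjj'] at this
  linarith

theorem not_max_of_discordant_rows_general (s q : ℕ) (α β : ℝ) (hα : 0 < α)
    (γ : Fin s → ℝ)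
    (μ' : Fin s → Fin q → ℝ) (hμ' : μ' ∈ Cset s q γ)
    (h : ∃ k k' : Fin s, k ≠ k' ∧ ∃ j j' : Fin q, j < j' ∧
      μ' k j < μ' k j' ∧ μ' k' j' < μ' k' j) :
    ¬ IsMaxOn (G s q α β) (Cset s q γ) μ' := by
  obtain ⟨k, k', -, j, j', hjj', hk, hk'⟩ := h
  intro hmax
  set D := ∑ m, μ' m j - ∑ m, μ' m j'
  have hup : D + (μ' k j' - μ' k j) ≤ 0 :=
    nonpos_of_mul_nonpos_right (swap_gain_nonpos_of_isMaxOn hμ' hmax k hjj'.ne)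
      (mul_pos hα (sub_pos.mpr hk))
  have hdown : 0 ≤ D + (μ' k' j' - μ' k' j) :=
    nonneg_of_mul_nonpos_right (swap_gain_nonpos_of_isMaxOn hμ' hmax k' hjj'.ne)
      (mul_neg_of_pos_of_neg hα (sub_neg.mpr hk'))
  linarith

theorem not_max_of_discordant_rows (s q : ℕ) (α β : ℝ) (hα : 0 < α) (hαβ : α < β)
    (γ : Fin s → ℝ) (hγ : ∀ k, γ k ∈ Set.Ioo (0 : ℝ) 1) (hγ1 : ∑ k, γ k = 1)
    (μ' : Fin s → Fin q → ℝ) (hμ' : μ' ∈ Cset s q γ)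
    (hμ'pos : ∀ k c, μ' k c ∈ Set.Ioo (0 : ℝ) 1)
    (h : ∃ k k' : Fin s, k ≠ k' ∧ ∃ j j' : Fin q, j < j' ∧
      μ' k j < μ' k j' ∧ μ' k' j' < μ' k' j) :
    ¬ IsMaxOn (G s q α β) (Cset s q γ) μ' :=
  not_max_of_discordant_rows_general s q α β hα γ μ' hμ' h
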